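/- A bijection g : ℝ⁴ → ℝ⁴ with g(0) = 0 that preserves the squared Minkowski interval (η²(g(a), g(b)) = η²(a,b) for all a, b) is linear and is an element of the Lorentz group, i.e., B(g(a), g(b)) = B(a,b) for all a, b. -/

import Mathlib

/-!
Taking `b = 0` shows that `g` preserves the quadratic form `B(a, a)`, and polarization then gives
`B(g a, g b) = B(a, b)`. Linearity follows because the Minkowski form is nondegenerate and `g`
is surjective: `g (a + b) - g a - g b` is `B`-orthogonal to every `g c`, hence to everything,
hence `0`; likewise for scalar multiples.
-/

def Bmink (u v : Fin 4 → ℝ) : ℝ := u 3 * v 3 - u 0 * v 0 - u 1 * v 1 - u 2 * v 2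
def eta2 (p q : Fin 4 → ℝ) : ℝ := Bmink (p - q) (p - q)

namespace LinearMap

variable {R M N : Type*} [CommRing R] [AddCommGroup M] [Module R M] [AddCommGroup N] [Module R N]

namespace BilinForm

theorem IsSymm.apply_sub_sub {B : LinearMap.BilinForm R M} (hB : B.IsSymm) (x y : M) :
    B (x - y) (x - y) = B x x - 2 * B x y + B y y := by
  simp only [map_sub, LinearMap.sub_apply, hB.eq y x]
  ring

theorem apply_map_map_of_apply_sub [Invertible (2 : R)]
    {B₁ : LinearMap.BilinForm R M} {B₂ : LinearMap.BilinForm R N}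
    (hB₁ : B₁.IsSymm) (hB₂ : B₂.IsSymm)
    {g : M → N} (h0 : g 0 = 0) (hg : ∀ x y, B₂ (g x - g y) (g x - g y) = B₁ (x - y) (x - y))
    (x y : M) : B₂ (g x) (g y) = B₁ x y := by
  have hself : ∀ z, B₂ (g z) (g z) = B₁ z z := fun z => by
    simpa [h0] using hg z 0
  have h := hg x y
  rw [hB₁.apply_sub_sub, hB₂.apply_sub_sub, hself, hself] at h
  exact (isUnit_of_invertible (2 : R)).mul_left_cancel (by linear_combination -h)

end BilinForm

section Surjective

variable {B₁ : M →ₗ[R] M →ₗ[R] R} {B₂ : N →ₗ[R] N →ₗ[R] R} {g : M → N}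

theorem map_eq_of_forall_apply_map (hB₂ : B₂.SeparatingLeft) (hsurj : g.Surjective)
    (hg : ∀ x y, B₂ (g x) (g y) = B₁ x y) {x : M} {v : N}
    (hv : ∀ y, B₂ v (g y) = B₁ x y) : g x = v := by
  refine sub_eq_zero.mp (hB₂ _ fun w => ?_)
  obtain ⟨y, rfl⟩ := hsurj w
  rw [map_sub, sub_apply, hg, hv, sub_self]

theorem isLinearMap_of_surjective_of_apply_map (hB₂ : B₂.SeparatingLeft)
    (hsurj : g.Surjective) (hg : ∀ x y, B₂ (g x) (g y) = B₁ x y) : IsLinearMap R g where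
  map_add x x' := map_eq_of_forall_apply_map hB₂ hsurj hg fun y => by
    rw [map_add, add_apply, hg, hg, map_add, add_apply]
  map_smul c x := map_eq_of_forall_apply_map hB₂ hsurj hg fun y => by
    rw [map_smul, smul_apply, hg, map_smul, smul_apply]

end Surjective

end LinearMap

def minkowskiForm : LinearMap.BilinForm ℝ (Fin 4 → ℝ) :=
  LinearMap.mk₂ ℝ Bmink (fun _ _ _ => by simp only [Bmink, Pi.add_apply]; ring)
    (fun _ _ _ => by simp only [Bmink, Pi.smul_apply, smul_eq_mul]; ring)
    (fun _ _ _ => by simp only [Bmink, Pi.add_apply]; ring)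
    (fun _ _ _ => by simp only [Bmink, Pi.smul_apply, smul_eq_mul]; ring)

theorem minkowskiForm_apply (u v : Fin 4 → ℝ) : minkowskiForm u v = Bmink u v := rfl

theorem minkowskiForm_isSymm : minkowskiForm.IsSymm :=
  ⟨fun u v => by simp only [minkowskiForm_apply, Bmink]; ring⟩

theorem minkowskiForm_separatingLeft : minkowskiForm.SeparatingLeft := fun v hv => by
  ext i
  have := hv (Pi.single i 1)
  fin_cases i <;> simpa [minkowskiForm_apply, Bmink] using this

theorem interval_preserving_is_lorentz (g : (Fin 4 → ℝ) → (Fin 4 → ℝ))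
    (hg : Function.Bijective g) (h0 : g 0 = 0)
    (h : ∀ a b : Fin 4 → ℝ, eta2 (g a) (g b) = eta2 a b) :
    IsLinearMap ℝ g ∧ ∀ a b : Fin 4 → ℝ, Bmink (g a) (g b) = Bmink a b := by
  have hB : ∀ a b, minkowskiForm (g a) (g b) = minkowskiForm a b :=
    LinearMap.BilinForm.apply_map_map_of_apply_sub minkowskiForm_isSymm minkowskiForm_isSymm h0 h
  exact ⟨LinearMap.isLinearMap_of_surjective_of_apply_map minkowskiForm_separatingLeft hg.2 hB,
    hB⟩
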